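/- arXiv:1812.08420 — 2 statements merged into one kernel-verified Lean document; each statement's English description precedes it below -/
import Mathlib

section
/- Let G be a diameter-2-critical graph with a dominating edge uv such that P_uv ∩ N(v) = ∅, and set X = {v} ∪ S_u ∪ P_uv ∪ S_uv and Y = {u} ∪ S_v. Then there exists an injective function f from the set of edges of G with both endpoints in X or both endpoints in Y to the set of non-adjacent pairs {b,c} with b ∈ X and c ∈ Y, such that for every such edge e, f(e) = {b,c} where b is an endpoint of e, c lies in the part (X or Y) not containing the endpoints of e, and e is critical for the pair {b,c}. -/
variable {V : Type*}

/-- A graph has diameter at most 2: every two vertices are joined by a walk of length ≤ 2. -/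
def DiamAtMostTwo (G : SimpleGraph V) : Prop :=
  ∀ x y : V, ∃ w : G.Walk x y, w.length ≤ 2

/-- A graph is diameter-2-critical: its diameter is 2 and deleting any edge increases it. -/
def IsD2C (G : SimpleGraph V) : Prop :=
  DiamAtMostTwo G ∧ (∃ x y : V, x ≠ y ∧ ¬ G.Adj x y) ∧
    ∀ e ∈ G.edgeSet, ¬ DiamAtMostTwo (G.deleteEdges {e})

/-- `uv` is a dominating edge: every vertex is `u`, `v`, or adjacent to one of them. -/
def IsDominatingEdge (G : SimpleGraph V) (u v : V) : Prop :=
  G.Adj u v ∧ ∀ x : V, x = u ∨ x = v ∨ G.Adj u x ∨ G.Adj v x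

/-- `e` is critical for the pair `{x,y}`: `x ≠ y`, they are at distance at most 2,
and every walk of length at most 2 from `x` to `y` uses `e`. -/
def CriticalFor (G : SimpleGraph V) (e : Sym2 V) (x y : V) : Prop :=
  x ≠ y ∧ (∃ w : G.Walk x y, w.length ≤ 2) ∧
    ∀ w : G.Walk x y, w.length ≤ 2 → e ∈ w.edges

/-- `P_uv`: vertices `x ∉ {u,v}` such that `uv` is critical for `{x,v}` or `{x,u}`. -/
def Puv (G : SimpleGraph V) (u v : V) : Set V :=
  {x | x ≠ u ∧ x ≠ v ∧ (CriticalFor G s(u, v) x v ∨ CriticalFor G s(u, v) x u)}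

/-- `S_uv`: common neighbours of `u` and `v`. -/
def Suv (G : SimpleGraph V) (u v : V) : Set V :=
  {x | G.Adj u x ∧ G.Adj v x}

/-- `S_w = N(w) \ (P_uv ∪ S_uv ∪ {w'})`, where `{w, w'} = {u, v}`. -/
def Sside (G : SimpleGraph V) (u v w w' : V) : Set V :=
  G.neighborSet w \ (Puv G u v ∪ Suv G u v ∪ {w'})

/-- The set `X = {v} ∪ S_u ∪ P_uv ∪ S_uv`. -/
def Xset (G : SimpleGraph V) (u v : V) : Set V :=
  {v} ∪ Sside G u v u v ∪ Puv G u v ∪ Suv G u v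

/-- The set `Y = {u} ∪ S_v`. -/
def Yset (G : SimpleGraph V) (u v : V) : Set V :=
  {u} ∪ Sside G u v v u

/-- An edge of `G` with both endpoints in `X` or both endpoints in `Y`. -/
def InnerEdge (G : SimpleGraph V) (u v : V) (e : Sym2 V) : Prop :=
  e ∈ G.edgeSet ∧ ((∀ a ∈ e, a ∈ Xset G u v) ∨ (∀ a ∈ e, a ∈ Yset G u v))

/-- An edge-assignment for `(G, uv)`: an injective map sending each edge `e` inside `X`
or inside `Y` to a non-adjacent pair `{b,c}` with one vertex in `X` and one in `Y`,
where `b` is an endpoint of `e`, `c` lies in the part not containing `e`, and `e` is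
critical for `{b,c}`. -/
def IsEdgeAssignment (G : SimpleGraph V) (u v : V) (f : Sym2 V → Sym2 V) : Prop :=
  Set.InjOn f {e | InnerEdge G u v e} ∧
    ∀ e, InnerEdge G u v e →
      ∃ b c, b ∈ e ∧ ¬ G.Adj b c ∧ f e = s(b, c) ∧ CriticalFor G e b c ∧
        ((∀ a ∈ e, a ∈ Xset G u v) → b ∈ Xset G u v ∧ c ∈ Yset G u v) ∧
        ((∀ a ∈ e, a ∈ Yset G u v) → b ∈ Yset G u v ∧ c ∈ Xset G u v)

/-- The set of `f`-free pairs: non-adjacent pairs `{b,c}` with `b ∈ X`, `c ∈ Y`,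
not in the image of `f`. -/
def freeSet (G : SimpleGraph V) (u v : V) (f : Sym2 V → Sym2 V) : Set (Sym2 V) :=
  {p | (∃ b c, b ∈ Xset G u v ∧ c ∈ Yset G u v ∧ ¬ G.Adj b c ∧ p = s(b, c)) ∧
    ∀ e, InnerEdge G u v e → f e ≠ p}

/-- The `f`-orientation: an edge `ab` inside `S_u` or inside `S_v` is oriented from `a`
to `b` whenever `f(ab) = {b,c}`, i.e. `b` belongs to the image pair and `a` does not. -/
def FOrient (G : SimpleGraph V) (u v : V) (f : Sym2 V → Sym2 V) (a b : V) : Prop :=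
  G.Adj a b ∧
    ((a ∈ Sside G u v u v ∧ b ∈ Sside G u v u v) ∨
      (a ∈ Sside G u v v u ∧ b ∈ Sside G u v v u)) ∧
    b ∈ f s(a, b) ∧ a ∉ f s(a, b)

/-- The graph `H₅`: vertices `u,v,p,q,r,s = 0,1,2,3,4,5`, edges
`uv, up, uq, us, vr, vs, pq, qr`. -/
def H5 : SimpleGraph (Fin 6) :=
  SimpleGraph.fromEdgeSet {s(0, 1), s(0, 2), s(0, 3), s(0, 5), s(1, 4), s(1, 5), s(2, 3), s(3, 4)}


section Statement9Aux

open SimpleGraph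

variable {G : SimpleGraph V} {u v : V}

private lemma edges_walk2 {x y : V} (w : G.Walk x y) (h : w.length ≤ 2) :
    w.edges = [] ∨ w.edges = [s(x,y)] ∨
      ∃ m, G.Adj x m ∧ G.Adj m y ∧ w.edges = [s(x,m), s(m,y)] := by
  match w with
  | .nil => left; rfl
  | .cons h1 .nil => right; left; rfl
  | .cons h1 (.cons h2 .nil) => exact Or.inr (Or.inr ⟨_, h1, h2, rfl⟩)
  | .cons h1 (.cons h2 (.cons h3 q)) => simp [SimpleGraph.Walk.length_cons] at h

private lemma crit_symm {e : Sym2 V} {x y : V}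
    (h : CriticalFor G e x y) : CriticalFor G e y x := by
  obtain ⟨hne, ⟨w, hw⟩, hall⟩ := h
  refine ⟨hne.symm, ⟨w.reverse, by simpa using hw⟩, fun w' hw' => ?_⟩
  have := hall w'.reverse (by simpa using hw')
  simpa [SimpleGraph.Walk.edges_reverse] using this

private lemma crit_eq_of_adj {e : Sym2 V} {x y : V}
    (h : CriticalFor G e x y) (hadj : G.Adj x y) : e = s(x,y) := by
  have := h.2.2 (SimpleGraph.Walk.cons hadj SimpleGraph.Walk.nil) (by simp)
  simpa using this

private lemma not_crit_of_walk2 {e : Sym2 V} {x c m : V}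
    (h : CriticalFor G e x c) (h1 : G.Adj x m) (h2 : G.Adj m c)
    (ne1 : e ≠ s(x,m)) (ne2 : e ≠ s(m,c)) : False := by
  have := h.2.2 (SimpleGraph.Walk.cons h1 (SimpleGraph.Walk.cons h2 SimpleGraph.Walk.nil))
    (by simp)
  simp only [SimpleGraph.Walk.edges_cons, SimpleGraph.Walk.edges_nil, List.mem_cons,
    List.not_mem_nil, or_false] at this
  tauto

private lemma every_edge_crit (hG : IsD2C G) {e : Sym2 V} (he : e ∈ G.edgeSet) :
    ∃ x y, CriticalFor G e x y := by
  have hnot := hG.2.2 e he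
  rw [DiamAtMostTwo] at hnot
  push_neg at hnot
  obtain ⟨x, y, hxy⟩ := hnot
  refine ⟨x, y, ?_, hG.1 x y, ?_⟩
  · rintro rfl
    have := hxy SimpleGraph.Walk.nil
    simp at this
  · intro w hw
    by_contra hmem
    have hav : ∀ e' ∈ w.edges, ¬ e' ∈ ({e} : Set (Sym2 V)) := by
      intro e' he' hes
      simp only [Set.mem_singleton_iff] at hes
      exact hmem (hes ▸ he')
    have := hxy (w.toDeleteEdges {e} hav)
    simp only [SimpleGraph.Walk.length_transfer] at this
    omega

private lemma crit_endpoint {e : Sym2 V} {x y : V}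
    (h : CriticalFor G e x y) : x ∈ e ∨ y ∈ e := by
  obtain ⟨w, hw⟩ := h.2.1
  have hmem := h.2.2 w hw
  rcases edges_walk2 w hw with h0 | h1 | ⟨m, _, _, h2⟩
  · rw [h0] at hmem; simp at hmem
  · rw [h1] at hmem; simp at hmem
    exact Or.inl (hmem ▸ Sym2.mem_mk_left x y)
  · rw [h2] at hmem; simp at hmem
    rcases hmem with rfl | rfl
    · exact Or.inl (Sym2.mem_mk_left x m)
    · exact Or.inr (Sym2.mem_mk_right m y)

private lemma puv_adj (hadj : G.Adj u v) (hP : Puv G u v ∩ G.neighborSet v = ∅)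
    {x : V} (hx : x ∈ Puv G u v) : G.Adj u x ∧ ¬ G.Adj v x := by
  have hne : u ≠ v := hadj.ne
  obtain ⟨hxu, hxv, hcrit⟩ := hx
  have hnadjv : ¬ G.Adj v x := by
    intro h
    exact Set.eq_empty_iff_forall_notMem.mp hP x ⟨⟨hxu, hxv, hcrit⟩, h⟩
  refine ⟨?_, hnadjv⟩
  rcases hcrit with h | h
  · obtain ⟨w, hw⟩ := h.2.1
    have hmem := h.2.2 w hw
    rcases edges_walk2 w hw with h0 | h1 | ⟨m, hm1, hm2, h2⟩
    · rw [h0] at hmem; simp at hmem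
    · rw [h1] at hmem
      rw [List.mem_singleton, Sym2.eq_iff] at hmem
      rcases hmem with ⟨ha, hb⟩ | ⟨ha, hb⟩
      · exact absurd ha.symm hxu
      · exact absurd ha hne
    · rw [h2] at hmem
      rw [List.mem_cons, List.mem_singleton] at hmem
      rcases hmem with h' | h'
      · rw [Sym2.eq_iff] at h'
        rcases h' with ⟨ha, hb⟩ | ⟨ha, hb⟩
        · exact absurd ha.symm hxu
        · exact absurd hb.symm hxv
      · rw [Sym2.eq_iff] at h'
        rcases h' with ⟨ha, hb⟩ | ⟨ha, hb⟩
        · subst ha; exact hm1.symm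
        · exact absurd ha hne
  · exfalso
    apply hnadjv
    obtain ⟨w, hw⟩ := h.2.1
    have hmem := h.2.2 w hw
    rcases edges_walk2 w hw with h0 | h1 | ⟨m, hm1, hm2, h2⟩
    · rw [h0] at hmem; simp at hmem
    · rw [h1] at hmem
      rw [List.mem_singleton, Sym2.eq_iff] at hmem
      rcases hmem with ⟨ha, hb⟩ | ⟨ha, hb⟩
      · exact absurd ha.symm hxu
      · exact absurd hb.symm hxv
    · rw [h2] at hmem
      rw [List.mem_cons, List.mem_singleton] at hmem
      rcases hmem with h' | h'
      · rw [Sym2.eq_iff] at h'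
        rcases h' with ⟨ha, hb⟩ | ⟨ha, hb⟩
        · exact absurd ha.symm hxu
        · exact absurd hb.symm hxv
      · rw [Sym2.eq_iff] at h'
        rcases h' with ⟨ha, hb⟩ | ⟨ha, hb⟩
        · exact absurd hb.symm hne
        · subst hb; exact hm1.symm

private lemma adj_u_of_mem_X (hadj : G.Adj u v) (hP : Puv G u v ∩ G.neighborSet v = ∅)
    {x : V} (hx : x ∈ Xset G u v) : G.Adj u x := by
  simp only [Xset, Set.mem_union, Set.mem_singleton_iff] at hx
  rcases hx with ((rfl | hx) | hx) | hx
  · exact hadj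
  · exact hx.1
  · exact (puv_adj hadj hP hx).1
  · exact hx.1

private lemma u_notMem_X (hadj : G.Adj u v) : u ∉ Xset G u v := by
  intro hx
  simp only [Xset, Set.mem_union, Set.mem_singleton_iff] at hx
  rcases hx with ((h | h) | h) | h
  · exact hadj.ne h
  · exact G.irrefl h.1
  · exact h.1 rfl
  · exact G.irrefl h.1

private lemma v_notMem_Y (hadj : G.Adj u v) : v ∉ Yset G u v := by
  intro hx
  simp only [Yset, Set.mem_union, Set.mem_singleton_iff] at hx
  rcases hx with h | h
  · exact hadj.ne h.symm
  · exact G.irrefl h.1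

private lemma adj_v_of_mem_Y (hadj : G.Adj u v) {y : V} (hy : y ∈ Yset G u v) :
    G.Adj v y := by
  simp only [Yset, Set.mem_union, Set.mem_singleton_iff] at hy
  rcases hy with rfl | hy
  · exact hadj.symm
  · exact hy.1

private lemma not_adj_u_of_mem_Sv {y : V} (hy : y ∈ Sside G u v v u) : ¬ G.Adj u y := by
  intro h
  exact hy.2 (Or.inl (Or.inr ⟨h, hy.1⟩))

private lemma XY_disjoint (hadj : G.Adj u v) (hP : Puv G u v ∩ G.neighborSet v = ∅)
    {x : V} (hx : x ∈ Xset G u v) (hy : x ∈ Yset G u v) : False := by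
  have hux := adj_u_of_mem_X hadj hP hx
  simp only [Yset, Set.mem_union, Set.mem_singleton_iff] at hy
  rcases hy with rfl | hy
  · exact G.irrefl hux
  · exact not_adj_u_of_mem_Sv hy hux

private lemma XY_cover (hdom : IsDominatingEdge G u v)
    (hP : Puv G u v ∩ G.neighborSet v = ∅) (x : V) :
    x ∈ Xset G u v ∨ x ∈ Yset G u v := by
  classical
  rcases hdom.2 x with rfl | rfl | h | h
  · exact Or.inr (Or.inl rfl)
  · exact Or.inl (Or.inl (Or.inl (Or.inl rfl)))
  · by_cases hx1 : x ∈ Puv G u v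
    · exact Or.inl (Or.inl (Or.inr hx1))
    by_cases hx2 : x ∈ Suv G u v
    · exact Or.inl (Or.inr hx2)
    by_cases hx3 : x = v
    · exact Or.inl (Or.inl (Or.inl (Or.inl hx3)))
    · refine Or.inl (Or.inl (Or.inl (Or.inr ⟨h, ?_⟩)))
      rintro ((hm | hm) | hm)
      exacts [hx1 hm, hx2 hm, hx3 hm]
  · by_cases hx0 : x = u
    · exact Or.inr (Or.inl hx0)
    by_cases hx2 : x ∈ Suv G u v
    · exact Or.inl (Or.inr hx2)
    have hx1 : x ∉ Puv G u v := fun hm =>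
      Set.eq_empty_iff_forall_notMem.mp hP x ⟨hm, h⟩
    refine Or.inr (Or.inr ⟨h, ?_⟩)
    rintro ((hm | hm) | hm)
    exacts [hx1 hm, hx2 hm, hx0 hm]

private lemma crit_side (hdom : IsDominatingEdge G u v)
    (hP : Puv G u v ∩ G.neighborSet v = ∅)
    {x y c : V} (_hxy : G.Adj x y) (hcrit : CriticalFor G s(x,y) x c) :
    ((x ∈ Xset G u v ∧ y ∈ Xset G u v) → c ∈ Yset G u v) ∧
    ((x ∈ Yset G u v ∧ y ∈ Yset G u v) → c ∈ Xset G u v) := by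
  have hadj := hdom.1
  constructor
  · rintro ⟨hxX, hyX⟩
    rcases XY_cover hdom hP c with hcX | hcY
    · exfalso
      have hux := adj_u_of_mem_X hadj hP hxX
      have huc := adj_u_of_mem_X hadj hP hcX
      refine not_crit_of_walk2 hcrit hux.symm huc ?_ ?_
      · rw [Ne, Sym2.eq_iff]
        rintro (⟨-, rfl⟩ | ⟨rfl, -⟩)
        · exact u_notMem_X hadj hyX
        · exact u_notMem_X hadj hxX
      · rw [Ne, Sym2.eq_iff]
        rintro (⟨rfl, -⟩ | ⟨rfl, -⟩)
        · exact u_notMem_X hadj hxX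
        · exact hcrit.1 rfl
    · exact hcY
  · rintro ⟨hxY, hyY⟩
    rcases XY_cover hdom hP c with hcX | hcY
    · exact hcX
    · exfalso
      have hvx : G.Adj v x := adj_v_of_mem_Y hadj hxY
      have hvc : G.Adj v c := adj_v_of_mem_Y hadj hcY
      refine not_crit_of_walk2 hcrit hvx.symm hvc ?_ ?_
      · rw [Ne, Sym2.eq_iff]
        rintro (⟨-, rfl⟩ | ⟨rfl, -⟩)
        · exact v_notMem_Y hadj hyY
        · exact v_notMem_Y hadj hxY
      · rw [Ne, Sym2.eq_iff]
        rintro (⟨rfl, -⟩ | ⟨rfl, -⟩)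
        · exact v_notMem_Y hadj hxY
        · exact hcrit.1 rfl

private lemma key' (hG : IsD2C G) (hdom : IsDominatingEdge G u v)
    (hP : Puv G u v ∩ G.neighborSet v = ∅) (x y : V)
    (he : InnerEdge G u v s(x,y)) :
    ∃ b c, b ∈ s(x,y) ∧ ¬ G.Adj b c ∧ CriticalFor G s(x,y) b c ∧
      ((∀ a ∈ s(x,y), a ∈ Xset G u v) → b ∈ Xset G u v ∧ c ∈ Yset G u v) ∧
      ((∀ a ∈ s(x,y), a ∈ Yset G u v) → b ∈ Yset G u v ∧ c ∈ Xset G u v) := by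
  have hadj := hdom.1
  have hxyAdj : G.Adj x y := he.1
  obtain ⟨p, q, hpq⟩ := every_edge_crit hG he.1
  have hexists : ∃ b c, b ∈ s(x,y) ∧ CriticalFor G s(x,y) b c := by
    rcases crit_endpoint hpq with h | h
    · exact ⟨p, q, h, hpq⟩
    · exact ⟨q, p, h, crit_symm hpq⟩
  obtain ⟨b, c, hb, hcrit⟩ := hexists
  have hside : ((x ∈ Xset G u v ∧ y ∈ Xset G u v) → c ∈ Yset G u v) ∧
      ((x ∈ Yset G u v ∧ y ∈ Yset G u v) → c ∈ Xset G u v) := by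
    rcases Sym2.mem_iff.mp hb with rfl | rfl
    · exact crit_side hdom hP hxyAdj hcrit
    · rw [Sym2.eq_swap] at hcrit
      have := crit_side hdom hP hxyAdj.symm hcrit
      exact ⟨fun h => this.1 ⟨h.2, h.1⟩, fun h => this.2 ⟨h.2, h.1⟩⟩
  have hXimp : (∀ a ∈ s(x,y), a ∈ Xset G u v) → b ∈ Xset G u v ∧ c ∈ Yset G u v := by
    intro h
    exact ⟨h b hb, hside.1 ⟨h x (Sym2.mem_mk_left x y), h y (Sym2.mem_mk_right x y)⟩⟩
  have hYimp : (∀ a ∈ s(x,y), a ∈ Yset G u v) → b ∈ Yset G u v ∧ c ∈ Xset G u v := by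
    intro h
    exact ⟨h b hb, hside.2 ⟨h x (Sym2.mem_mk_left x y), h y (Sym2.mem_mk_right x y)⟩⟩
  refine ⟨b, c, hb, ?_, hcrit, hXimp, hYimp⟩
  intro hbc
  have heq := crit_eq_of_adj hcrit hbc
  have hcmem : c ∈ s(x,y) := by rw [heq]; exact Sym2.mem_mk_right b c
  rcases he.2 with hX | hY
  · exact XY_disjoint hadj hP (hX c hcmem) (hXimp hX).2
  · exact XY_disjoint hadj hP (hYimp hY).2 (hY c hcmem)

private lemma unique_same {A B : Set V} (hdisj : ∀ z, z ∈ A → z ∈ B → False)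
    {e e' : Sym2 V} {b c : V}
    (heA : ∀ a ∈ e, a ∈ A) (he'A : ∀ a ∈ e', a ∈ A) (hcB : c ∈ B)
    (h1 : CriticalFor G e b c) (h2 : CriticalFor G e' b c) : e = e' := by
  obtain ⟨w, hw⟩ := h1.2.1
  have m1 := h1.2.2 w hw
  have m2 := h2.2.2 w hw
  have hce : c ∉ e := fun hc => hdisj c (heA c hc) hcB
  have hce' : c ∉ e' := fun hc => hdisj c (he'A c hc) hcB
  rcases edges_walk2 w hw with h0 | h1' | ⟨m, hm1, hm2, h2'⟩
  · rw [h0] at m1; simp at m1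
  · rw [h1'] at m1 m2
    simp only [List.mem_singleton] at m1 m2
    rw [m1, m2]
  · rw [h2'] at m1 m2
    simp only [List.mem_cons, List.not_mem_nil, or_false] at m1 m2
    have He : e = s(b, m) := by
      rcases m1 with h | h
      · exact h
      · exact absurd (by rw [h]; exact Sym2.mem_mk_right m c) hce
    have He' : e' = s(b, m) := by
      rcases m2 with h | h
      · exact h
      · exact absurd (by rw [h]; exact Sym2.mem_mk_right m c) hce'
    rw [He, He']

private lemma unique_mixed {A B : Set V} (hdisj : ∀ z, z ∈ A → z ∈ B → False)
    {e e' : Sym2 V} {b c : V}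
    (heA : ∀ a ∈ e, a ∈ A) (he'B : ∀ a ∈ e', a ∈ B) (hbA : b ∈ A) (hcB : c ∈ B)
    (h1 : CriticalFor G e b c) (h2 : CriticalFor G e' b c) : False := by
  obtain ⟨w, hw⟩ := h1.2.1
  have m1 := h1.2.2 w hw
  have m2 := h2.2.2 w hw
  have hce : c ∉ e := fun hc => hdisj c (heA c hc) hcB
  have hbe' : b ∉ e' := fun hb => hdisj b hbA (he'B b hb)
  rcases edges_walk2 w hw with h0 | h1' | ⟨m, hm1, hm2, h2'⟩
  · rw [h0] at m1; simp at m1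
  · rw [h1'] at m1
    simp only [List.mem_singleton] at m1
    exact hce (by rw [m1]; exact Sym2.mem_mk_right b c)
  · rw [h2'] at m1 m2
    simp only [List.mem_cons, List.not_mem_nil, or_false] at m1 m2
    have He : e = s(b, m) := by
      rcases m1 with h | h
      · exact h
      · exact absurd (by rw [h]; exact Sym2.mem_mk_right m c) hce
    have He' : e' = s(m, c) := by
      rcases m2 with h | h
      · exact absurd (by rw [h]; exact Sym2.mem_mk_left b m) hbe'
      · exact h
    have hmA : m ∈ A := heA m (by rw [He]; exact Sym2.mem_mk_right b m)
    have hmB : m ∈ B := he'B m (by rw [He']; exact Sym2.mem_mk_left m c)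
    exact hdisj m hmA hmB

end Statement9Aux

/-- for a D2C graph with a dominating edge `uv` such that
`P_uv ∩ N(v) = ∅`, an edge-assignment exists. -/
theorem statement9 {V : Type*} (G : SimpleGraph V) (u v : V)
    (hG : IsD2C G) (hdom : IsDominatingEdge G u v)
    (hP : Puv G u v ∩ G.neighborSet v = ∅) :
    ∃ f : Sym2 V → Sym2 V, IsEdgeAssignment G u v f := by
  classical
  have hadj := hdom.1
  have key : ∀ e : Sym2 V, ∃ p : V × V, InnerEdge G u v e →
      p.1 ∈ e ∧ ¬ G.Adj p.1 p.2 ∧ CriticalFor G e p.1 p.2 ∧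
      ((∀ a ∈ e, a ∈ Xset G u v) → p.1 ∈ Xset G u v ∧ p.2 ∈ Yset G u v) ∧
      ((∀ a ∈ e, a ∈ Yset G u v) → p.1 ∈ Yset G u v ∧ p.2 ∈ Xset G u v) := by
    intro e
    by_cases he : InnerEdge G u v e
    · revert he
      refine Sym2.ind (fun x y he => ?_) e
      obtain ⟨b, c, h1, h2, h3, h4, h5⟩ := key' hG hdom hP x y he
      exact ⟨(b, c), fun _ => ⟨h1, h2, h3, h4, h5⟩⟩
    · exact ⟨(u, u), fun h => absurd h he⟩
  choose g hg using key
  have hdisjXY : ∀ z, z ∈ Xset G u v → z ∈ Yset G u v → False :=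
    fun z h1 h2 => XY_disjoint hadj hP h1 h2
  have hdisjYX : ∀ z, z ∈ Yset G u v → z ∈ Xset G u v → False :=
    fun z h1 h2 => XY_disjoint hadj hP h2 h1
  refine ⟨fun e => s((g e).1, (g e).2), ?_, ?_⟩
  · intro e he e' he' hfe
    simp only [Set.mem_setOf_eq] at he he'
    obtain ⟨hb, hn, hcrit, hXi, hYi⟩ := hg e he
    obtain ⟨hb', hn', hcrit', hXi', hYi'⟩ := hg e' he'
    simp only [Sym2.eq_iff] at hfe
    rcases he.2 with hX | hY <;> rcases he'.2 with hX' | hY'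
    · obtain ⟨hbX, hcY⟩ := hXi hX
      obtain ⟨hbX', hcY'⟩ := hXi' hX'
      rcases hfe with ⟨h1, h2⟩ | ⟨h1, h2⟩
      · rw [← h1, ← h2] at hcrit'
        exact unique_same hdisjXY hX hX' hcY hcrit hcrit'
      · exact absurd (h1 ▸ hcY' : (g e).1 ∈ Yset G u v) (fun hh => hdisjXY _ hbX hh)
    · obtain ⟨hbX, hcY⟩ := hXi hX
      obtain ⟨hbY', hcX'⟩ := hYi' hY'
      rcases hfe with ⟨h1, h2⟩ | ⟨h1, h2⟩
      · exact absurd (h1 ▸ hbY' : (g e).1 ∈ Yset G u v) (fun hh => hdisjXY _ hbX hh)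
      · rw [← h1, ← h2] at hcrit'
        exact absurd (unique_mixed hdisjXY hX hY' hbX hcY hcrit (crit_symm hcrit')) id
    · obtain ⟨hbY, hcX⟩ := hYi hY
      obtain ⟨hbX', hcY'⟩ := hXi' hX'
      rcases hfe with ⟨h1, h2⟩ | ⟨h1, h2⟩
      · exact absurd (h1 ▸ hbX' : (g e).1 ∈ Xset G u v) (fun hh => hdisjYX _ hbY hh)
      · rw [← h1, ← h2] at hcrit'
        exact absurd (unique_mixed hdisjYX hY hX' hbY hcX hcrit (crit_symm hcrit')) id
    · obtain ⟨hbY, hcX⟩ := hYi hY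
      obtain ⟨hbY', hcX'⟩ := hYi' hY'
      rcases hfe with ⟨h1, h2⟩ | ⟨h1, h2⟩
      · rw [← h1, ← h2] at hcrit'
        exact unique_same hdisjYX hY hY' hcX hcrit hcrit'
      · exact absurd (h1 ▸ hcX' : (g e).1 ∈ Xset G u v) (fun hh => hdisjYX _ hbY hh)
  · intro e he
    obtain ⟨hb, hn, hcrit, hXi, hYi⟩ := hg e he
    exact ⟨(g e).1, (g e).2, hb, hn, rfl, hcrit, hXi, hYi⟩
end

section
/- Let G be a diameter-2-critical graph with a dominating edge uv such that P_uv = ∅, let f be an edge-assignment for (G,uv), and let {w,w'} = {u,v}. Let x, y ∈ S_w be two vertices such that the edge xy is oriented from x to y in the f-orientation. If no f-free pair contains x or y, then there exists a vertex t ∈ S_{w'} not adjacent to y such that N(x) ∩ S_{w'} = (N(y) ∩ S_{w'}) ∪ {t}. -/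
variable {V : Type*}

private lemma edges_pair {G : SimpleGraph V} {a m b : V} (h1 : G.Adj a m) (h2 : G.Adj m b) :
    ∃ w : G.Walk a b, w.length ≤ 2 ∧ w.edges = [s(a, m), s(m, b)] :=
  ⟨.cons h1 (.cons h2 .nil), by simp, by simp⟩

private lemma crit_two {G : SimpleGraph V} {e : Sym2 V} {a b m : V}
    (hc : CriticalFor G e a b) (h1 : G.Adj a m) (h2 : G.Adj m b) :
    e = s(a, m) ∨ e = s(m, b) := by
  obtain ⟨w, hlen, hedges⟩ := edges_pair h1 h2
  have := hc.2.2 w hlen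
  rw [hedges] at this
  simpa using this

private lemma walk_le_two {G : SimpleGraph V} {a b : V} (w : G.Walk a b) (h : w.length ≤ 2)
    {e : Sym2 V} (he : e ∈ w.edges) :
    (e = s(a, b) ∧ G.Adj a b) ∨ ∃ m, G.Adj a m ∧ G.Adj m b ∧ (e = s(a, m) ∨ e = s(m, b)) := by
  cases w with
  | nil => simp at he
  | cons h1 p =>
    rename_i m
    cases p with
    | nil =>
      simp only [SimpleGraph.Walk.edges_cons, SimpleGraph.Walk.edges_nil,
        List.mem_singleton] at he
      exact Or.inl ⟨he, h1⟩
    | cons h2 q =>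
      rename_i m2
      cases q with
      | nil =>
        right
        refine ⟨m, h1, h2, ?_⟩
        simpa using he
      | cons h3 r => simp [SimpleGraph.Walk.length_cons] at h

private lemma core {G : SimpleGraph V} {u v : V}
    (hd2 : DiamAtMostTwo G)
    {f : Sym2 V → Sym2 V} {A B S2 : Set V} {x y : V}
    (hAss : ∀ e, InnerEdge G u v e → ∃ b c, b ∈ e ∧ ¬ G.Adj b c ∧ f e = s(b, c) ∧
      CriticalFor G e b c ∧
      (((∀ a ∈ e, a ∈ A) ∧ b ∈ A ∧ c ∈ B) ∨ ((∀ a ∈ e, a ∈ B) ∧ b ∈ B ∧ c ∈ A)))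
    (hNF : ∀ b c, b ∈ A → c ∈ B → ¬ G.Adj b c → (b = x ∨ b = y) →
      ∃ e, InnerEdge G u v e ∧ f e = s(b, c))
    (hxA : x ∈ A) (hyA : y ∈ A) (hxB : x ∉ B) (hyB : y ∉ B)
    (hS2B : ∀ s ∈ S2, s ∈ B) (hS2A : ∀ s ∈ S2, s ∉ A)
    (hCS : ∀ c, c ∈ B → ¬ G.Adj y c →
      (∀ m, G.Adj y m → G.Adj m c → s(x, y) = s(y, m) ∨ s(x, y) = s(m, c)) → c ∈ S2)
    (hInner : InnerEdge G u v s(x, y))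
    (hadj : G.Adj x y) (hbin : y ∈ f s(x, y)) (hanot : x ∉ f s(x, y)) :
    ∃ t ∈ S2, ¬ G.Adj y t ∧
      G.neighborSet x ∩ S2 = (G.neighborSet y ∩ S2) ∪ {t} := by
  have hne : x ≠ y := hadj.ne
  obtain ⟨b, c, hb, hnadj, hfe, hcrit, hD⟩ := hAss s(x, y) hInner
  have hxbc : x ∉ s(b, c) := by rw [hfe] at hanot; exact hanot
  have hybc : y ∈ s(b, c) := by rw [hfe] at hbin; exact hbin
  have hbxy : b = x ∨ b = y := by simpa using hb
  have hbx : b ≠ x := fun h => hxbc (by simp [h])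
  have hby : b = y := hbxy.resolve_left hbx
  subst b
  have hcB : c ∈ B := by
    rcases hD with ⟨_, _, hcB⟩ | ⟨hins, _, _⟩
    · exact hcB
    · exact absurd (hins x (by simp)) hxB
  have hync : ¬ G.Adj y c := hnadj
  have hcS2 : c ∈ S2 := hCS c hcB hync (fun m hym hmc => crit_two hcrit hym hmc)
  have hcy : c ≠ y := fun h => hyB (h ▸ hcB)
  have hcx : c ≠ x := fun h => hxB (h ▸ hcB)
  have hxc : G.Adj x c := by
    obtain ⟨w0, hw0⟩ := hd2 y c
    have hmem := hcrit.2.2 w0 hw0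
    rcases walk_le_two w0 hw0 hmem with ⟨heq, hadjyc⟩ | ⟨m, hym, hmc, heq | heq⟩
    · exact absurd hadjyc hync
    · rcases Sym2.eq_iff.mp heq with ⟨h1, h2⟩ | ⟨h1, h2⟩
      · exact absurd h1 hne
      · exact h1 ▸ hmc
    · rcases Sym2.eq_iff.mp heq with ⟨h1, h2⟩ | ⟨h1, h2⟩
      · exact absurd h2.symm hcy
      · exact absurd h1.symm hcx
  -- Claim A
  have claimA : ∀ s ∈ S2, G.Adj y s → G.Adj x s := by
    intro s hs hys
    by_contra hxs
    obtain ⟨e, he, hfe2⟩ := hNF x s hxA (hS2B s hs) hxs (Or.inl rfl)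
    obtain ⟨b', c', hb', hnadj', hfe', hcrit', hD'⟩ := hAss e he
    have hbc' : s(b', c') = s(x, s) := hfe'.symm.trans hfe2
    have hsx : s ≠ x := fun h => hxB (h ▸ hS2B s hs)
    have hsy : s ≠ y := fun h => hyB (h ▸ hS2B s hs)
    rcases hD' with ⟨hins, hbA, hcB'⟩ | ⟨hins, hbB, hcA⟩
    · have hbs : b' = x ∧ c' = s := by
        rcases Sym2.eq_iff.mp hbc' with ⟨h1, h2⟩ | ⟨h1, h2⟩
        · exact ⟨h1, h2⟩
        · exact absurd (h1 ▸ hbA) (hS2A s hs)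
      obtain ⟨h1x, h2x⟩ := hbs; subst h1x; subst h2x
      rcases crit_two hcrit' hadj hys with heq | heq
      · rw [heq] at hfe2
        exact hanot (by rw [hfe2]; simp)
      · rw [heq] at hb'
        rcases Sym2.mem_iff.mp hb' with h | h
        · exact hne h
        · exact hsx h.symm
    · have hbs : b' = s ∧ c' = x := by
        rcases Sym2.eq_iff.mp hbc' with ⟨h1, h2⟩ | ⟨h1, h2⟩
        · exact absurd (h1 ▸ hbB) hxB
        · exact ⟨h1, h2⟩
      obtain ⟨h1x, h2x⟩ := hbs; subst h1x; subst h2x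
      rcases crit_two hcrit' hys.symm hadj.symm with heq | heq
      · exact hyB (hins y (by rw [heq]; simp))
      · rw [heq] at hb'
        rcases Sym2.mem_iff.mp hb' with h | h
        · exact hsy h
        · exact hsx h
  -- Claim B
  have claimB : ∀ s ∈ S2, G.Adj x s → s = c ∨ G.Adj y s := by
    intro s hs hxs
    by_contra hcon
    push_neg at hcon
    obtain ⟨hsc, hys⟩ := hcon
    obtain ⟨e, he, hfe2⟩ := hNF y s hyA (hS2B s hs) hys (Or.inr rfl)
    obtain ⟨b', c', hb', hnadj', hfe', hcrit', hD'⟩ := hAss e he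
    have hbc' : s(b', c') = s(y, s) := hfe'.symm.trans hfe2
    have hsx : s ≠ x := fun h => hxB (h ▸ hS2B s hs)
    have hsy : s ≠ y := fun h => hyB (h ▸ hS2B s hs)
    rcases hD' with ⟨hins, hbA, hcB'⟩ | ⟨hins, hbB, hcA⟩
    · have hbs : b' = y ∧ c' = s := by
        rcases Sym2.eq_iff.mp hbc' with ⟨h1, h2⟩ | ⟨h1, h2⟩
        · exact ⟨h1, h2⟩
        · exact absurd (h1 ▸ hbA) (hS2A s hs)
      obtain ⟨h1, h2⟩ := hbs
      have hcrit2 : CriticalFor G e y s := by rw [h1, h2] at hcrit'; exact hcrit'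
      have hbe : y ∈ e := h1 ▸ hb'
      rcases crit_two hcrit2 hadj.symm hxs with heq | heq
      · have hfxy : f s(x, y) = s(y, s) := by
          rw [show s(x, y) = s(y, x) from Sym2.eq_swap, ← heq]; exact hfe2
        have h3 : s(y, c) = s(y, s) := hfe.symm.trans hfxy
        rcases Sym2.eq_iff.mp h3 with ⟨_, h4⟩ | ⟨h4, h5⟩
        · exact hsc h4.symm
        · exact hsy h4.symm
      · have hmem : y ∈ s(x, s) := heq ▸ hbe
        rcases Sym2.mem_iff.mp hmem with h | h
        · exact hne h.symm
        · exact hsy h.symm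
    · have hbs : b' = s ∧ c' = y := by
        rcases Sym2.eq_iff.mp hbc' with ⟨h1, h2⟩ | ⟨h1, h2⟩
        · exact absurd (h1 ▸ hbB) hyB
        · exact ⟨h1, h2⟩
      obtain ⟨h1x, h2x⟩ := hbs; subst h1x; subst h2x
      rcases crit_two hcrit' hxs.symm hadj with heq | heq
      · exact hxB (hins x (by rw [heq]; simp))
      · rw [heq] at hb'
        rcases Sym2.mem_iff.mp hb' with h | h
        · exact hsx h
        · exact hsy h
  refine ⟨c, hcS2, hync, ?_⟩
  ext z
  simp only [Set.mem_inter_iff, SimpleGraph.mem_neighborSet, Set.mem_union,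
    Set.mem_singleton_iff]
  constructor
  · rintro ⟨hxz, hz⟩
    rcases claimB z hz hxz with h | h
    · exact Or.inr h
    · exact Or.inl ⟨h, hz⟩
  · rintro (⟨hyz, hz⟩ | rfl)
    · exact ⟨claimA z hz hyz, hz⟩
    · exact ⟨hxc, hcS2⟩

private lemma mem_Sside_iff {G : SimpleGraph V} {u v w w' z : V} :
    z ∈ Sside G u v w w' ↔
      G.Adj w z ∧ z ∉ Puv G u v ∧ ¬(G.Adj u z ∧ G.Adj v z) ∧ z ≠ w' := by
  simp only [Sside, Set.mem_diff, SimpleGraph.mem_neighborSet, Set.mem_union,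
    Set.mem_singleton_iff, Suv, Set.mem_setOf_eq]
  tauto

private lemma mem_X_iff {G : SimpleGraph V} {u v z : V} (hP : Puv G u v = ∅) :
    z ∈ Xset G u v ↔ z = v ∨ z ∈ Sside G u v u v ∨ (G.Adj u z ∧ G.Adj v z) := by
  simp only [Xset, Set.mem_union, Set.mem_singleton_iff, hP, Set.mem_empty_iff_false,
    Suv, Set.mem_setOf_eq]
  tauto

private lemma mem_Y_iff {G : SimpleGraph V} {u v z : V} :
    z ∈ Yset G u v ↔ z = u ∨ z ∈ Sside G u v v u := by
  simp only [Yset, Set.mem_union, Set.mem_singleton_iff]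

/-- if `xy` is an arc of the `f`-orientation inside `S_w` and no `f`-free
pair contains `x` or `y`, then `N(x) ∩ S_{w'} = (N(y) ∩ S_{w'}) ∪ {t}` for some
`t ∈ S_{w'}` not adjacent to `y`. -/
theorem statement12 {V : Type*} (G : SimpleGraph V) (u v : V)
    (hG : IsD2C G) (hdom : IsDominatingEdge G u v) (hP : Puv G u v = ∅)
    (f : Sym2 V → Sym2 V) (hf : IsEdgeAssignment G u v f)
    (w w' : V) (hw : (w = u ∧ w' = v) ∨ (w = v ∧ w' = u))
    (x y : V) (hx : x ∈ Sside G u v w w') (hy : y ∈ Sside G u v w w')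
    (hxy : FOrient G u v f x y)
    (hfree : ∀ p ∈ freeSet G u v f, x ∉ p ∧ y ∉ p) :
    ∃ t ∈ Sside G u v w' w, ¬ G.Adj y t ∧
      G.neighborSet x ∩ Sside G u v w' w =
        (G.neighborSet y ∩ Sside G u v w' w) ∪ {t} := by
  obtain ⟨hd2, -, -⟩ := hG
  have hSleft : ∀ z ∈ Sside G u v u v, G.Adj u z ∧ ¬ G.Adj v z := by
    intro z hz
    rw [mem_Sside_iff] at hz
    exact ⟨hz.1, fun h => hz.2.2.1 ⟨hz.1, h⟩⟩
  have hSright : ∀ z ∈ Sside G u v v u, G.Adj v z ∧ ¬ G.Adj u z := by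
    intro z hz
    rw [mem_Sside_iff] at hz
    exact ⟨hz.1, fun h => hz.2.2.1 ⟨h, hz.1⟩⟩
  have hSuX : ∀ z ∈ Sside G u v u v, z ∈ Xset G u v := fun z hz =>
    (mem_X_iff hP).mpr (Or.inr (Or.inl hz))
  have hSvY : ∀ z ∈ Sside G u v v u, z ∈ Yset G u v := fun z hz =>
    mem_Y_iff.mpr (Or.inr hz)
  have hSunotY : ∀ z ∈ Sside G u v u v, z ∉ Yset G u v := by
    intro z hz hzY
    obtain ⟨hu, hv⟩ := hSleft z hz
    rcases mem_Y_iff.mp hzY with rfl | h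
    · exact G.irrefl hu
    · exact hv (hSright z h).1
  have hSvnotX : ∀ z ∈ Sside G u v v u, z ∉ Xset G u v := by
    intro z hz hzX
    obtain ⟨hv, hu⟩ := hSright z hz
    rcases (mem_X_iff hP).mp hzX with rfl | h | ⟨h1, h2⟩
    · exact G.irrefl hv
    · exact hu (hSleft z h).1
    · exact hu h1
  have hNFX : ∀ b c, b ∈ Xset G u v → c ∈ Yset G u v → ¬ G.Adj b c → (b = x ∨ b = y) →
      ∃ e, InnerEdge G u v e ∧ f e = s(b, c) := by
    intro b c hbX hcY hn hbxy
    by_contra hcon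
    push_neg at hcon
    have hmem : s(b, c) ∈ freeSet G u v f :=
      ⟨⟨b, c, hbX, hcY, hn, rfl⟩, fun e he => hcon e he⟩
    have hh := hfree _ hmem
    rcases hbxy with rfl | rfl
    · exact hh.1 (Sym2.mem_mk_left _ _)
    · exact hh.2 (Sym2.mem_mk_left _ _)
  have hNFY : ∀ b c, b ∈ Yset G u v → c ∈ Xset G u v → ¬ G.Adj b c → (b = x ∨ b = y) →
      ∃ e, InnerEdge G u v e ∧ f e = s(b, c) := by
    intro b c hbY hcX hn hbxy
    by_contra hcon
    push_neg at hcon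
    have hmem : s(b, c) ∈ freeSet G u v f :=
      ⟨⟨c, b, hcX, hbY, fun h => hn h.symm, Sym2.eq_swap.symm⟩, fun e he => hcon e he⟩
    have hh := hfree _ hmem
    rcases hbxy with rfl | rfl
    · exact hh.1 (Sym2.mem_mk_left _ _)
    · exact hh.2 (Sym2.mem_mk_left _ _)
  obtain ⟨hadj, -, hbin, hanot⟩ := hxy
  rcases hw with ⟨hw1, hw2⟩ | ⟨hw1, hw2⟩
  · -- w = u, w' = v : A = X, B = Y
    subst w; subst w'
    have hAss : ∀ e, InnerEdge G u v e → ∃ b c, b ∈ e ∧ ¬ G.Adj b c ∧ f e = s(b, c) ∧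
        CriticalFor G e b c ∧
        (((∀ a ∈ e, a ∈ Xset G u v) ∧ b ∈ Xset G u v ∧ c ∈ Yset G u v) ∨
          ((∀ a ∈ e, a ∈ Yset G u v) ∧ b ∈ Yset G u v ∧ c ∈ Xset G u v)) := by
      intro e he
      obtain ⟨b, c, h1, h2, h3, h4, h5, h6⟩ := hf.2 e he
      refine ⟨b, c, h1, h2, h3, h4, ?_⟩
      rcases he.2 with h | h
      · exact Or.inl ⟨h, h5 h⟩
      · exact Or.inr ⟨h, h6 h⟩
    have hInner : InnerEdge G u v s(x, y) :=
      ⟨G.mem_edgeSet.mpr hadj, Or.inl (by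
        intro a ha
        rcases Sym2.mem_iff.mp ha with rfl | rfl
        exacts [hSuX a hx, hSuX a hy])⟩
    have hCS : ∀ c, c ∈ Yset G u v → ¬ G.Adj y c →
        (∀ m, G.Adj y m → G.Adj m c → s(x, y) = s(y, m) ∨ s(x, y) = s(m, c)) →
        c ∈ Sside G u v v u := by
      intro c hc hyc _
      rcases mem_Y_iff.mp hc with rfl | h
      · exact absurd (hSleft y hy).1.symm hyc
      · exact h
    exact core hd2 hAss hNFX (hSuX x hx) (hSuX y hy) (hSunotY x hx) (hSunotY y hy)
      hSvY hSvnotX hCS hInner hadj hbin hanot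
  · -- w = v, w' = u : A = Y, B = X
    subst w; subst w'
    have hAss : ∀ e, InnerEdge G u v e → ∃ b c, b ∈ e ∧ ¬ G.Adj b c ∧ f e = s(b, c) ∧
        CriticalFor G e b c ∧
        (((∀ a ∈ e, a ∈ Yset G u v) ∧ b ∈ Yset G u v ∧ c ∈ Xset G u v) ∨
          ((∀ a ∈ e, a ∈ Xset G u v) ∧ b ∈ Xset G u v ∧ c ∈ Yset G u v)) := by
      intro e he
      obtain ⟨b, c, h1, h2, h3, h4, h5, h6⟩ := hf.2 e he
      refine ⟨b, c, h1, h2, h3, h4, ?_⟩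
      rcases he.2 with h | h
      · exact Or.inr ⟨h, h5 h⟩
      · exact Or.inl ⟨h, h6 h⟩
    have hInner : InnerEdge G u v s(x, y) :=
      ⟨G.mem_edgeSet.mpr hadj, Or.inr (by
        intro a ha
        rcases Sym2.mem_iff.mp ha with rfl | rfl
        exacts [hSvY a hx, hSvY a hy])⟩
    have hCS : ∀ c, c ∈ Xset G u v → ¬ G.Adj y c →
        (∀ m, G.Adj y m → G.Adj m c → s(x, y) = s(y, m) ∨ s(x, y) = s(m, c)) →
        c ∈ Sside G u v u v := by
      intro c hc hyc hwalk
      obtain ⟨hvy, huy⟩ := hSright y hy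
      obtain ⟨hvx, hux⟩ := hSright x hx
      rcases (mem_X_iff hP).mp hc with rfl | h | ⟨huc, hvc⟩
      · exact absurd hvy.symm hyc
      · exact h
      · exfalso
        rcases hwalk v hvy.symm hvc with heq | heq
        · rcases Sym2.eq_iff.mp heq with ⟨h1, h2⟩ | ⟨h1, h2⟩
          · exact hadj.ne h1
          · exact hvx.ne h1.symm
        · rcases Sym2.eq_iff.mp heq with ⟨h1, h2⟩ | ⟨h1, h2⟩
          · exact hvx.ne h1.symm
          · exact hvy.ne h2.symm
    exact core hd2 hAss hNFY (hSvY x hx) (hSvY y hy) (hSvnotX x hx) (hSvnotX y hy)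
      hSuX hSunotY hCS hInner hadj hbin hanot
end
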